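/- arXiv:1803.10073 — 4 statements merged into one kernel-verified Lean document; each statement's English description precedes it below -/
import Mathlib

section
/- There exists a bijection f : ℕ+ → ℕ+ such that for every n ≥ 1, f(n) divides f(n+1) or f(n+1) divides f(n). -/
namespace ChainPerm

def MX (L : List ℕ) : ℕ := L.foldr max 0

lemma le_MX {x : ℕ} {L : List ℕ} (h : x ∈ L) : x ≤ MX L := by
  induction L with
  | nil => cases h
  | cons a t ih =>
    rcases List.mem_cons.1 h with rfl | h
    · exact le_max_left _ _
    · exact le_trans (ih h) (le_max_right _ _)

lemma headI_mem {L : List ℕ} (h : L ≠ []) : L.headI ∈ L := by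
  cases L with
  | nil => exact absurd rfl h
  | cons a t => exact List.mem_cons_self

lemma exists_fresh (L : List ℕ) : ∃ m, 1 ≤ m ∧ m ∉ L :=
  ⟨MX L + 1, Nat.succ_le_succ (Nat.zero_le _), fun h => by
    have := le_MX h; omega⟩

def F : ℕ → List ℕ
  | 0 => [1]
  | k + 1 =>
    let L := F k
    let s := Nat.find (exists_fresh L)
    s :: (L.headI * s * (MX L + 1)) :: L

def s (k : ℕ) : ℕ := Nat.find (exists_fresh (F k))

lemma F_succ (k : ℕ) :
    F (k + 1) = s k :: ((F k).headI * s k * (MX (F k) + 1)) :: F k := rfl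

lemma length_F (k : ℕ) : (F k).length = 2 * k + 1 := by
  induction k with
  | zero => rfl
  | succ k ih => rw [F_succ]; simp [ih]; omega

lemma F_ne_nil (k : ℕ) : F k ≠ [] := by
  intro h
  have := length_F k
  rw [h] at this
  simp at this

lemma one_le_s (k : ℕ) : 1 ≤ s k := (Nat.find_spec (exists_fresh (F k))).1

lemma s_not_mem (k : ℕ) : s k ∉ F k := (Nat.find_spec (exists_fresh (F k))).2

lemma mem_F_pos : ∀ k, ∀ x ∈ F k, 1 ≤ x := by
  intro k
  induction k with
  | zero => intro x hx; simp [F] at hx; omega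
  | succ k ih =>
    intro x hx
    rw [F_succ] at hx
    rcases List.mem_cons.1 hx with rfl | hx
    · exact one_le_s k
    rcases List.mem_cons.1 hx with rfl | hx
    · have h1 : 1 ≤ (F k).headI := ih _ (headI_mem (F_ne_nil k))
      have := one_le_s k
      exact Nat.one_le_iff_ne_zero.2 (by positivity)
    · exact ih _ hx

lemma headI_le_MX (k : ℕ) : (F k).headI ≤ MX (F k) :=
  le_MX (headI_mem (F_ne_nil k))

lemma M_gt_MX (k : ℕ) : MX (F k) < (F k).headI * s k * (MX (F k) + 1) := by
  have h1 : 1 ≤ (F k).headI := mem_F_pos k _ (headI_mem (F_ne_nil k))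
  have h2 := one_le_s k
  calc MX (F k) < MX (F k) + 1 := Nat.lt_succ_self _
    _ ≤ (F k).headI * s k * (MX (F k) + 1) := Nat.le_mul_of_pos_left _ (by positivity)

lemma M_not_mem (k : ℕ) : (F k).headI * s k * (MX (F k) + 1) ∉ F k := fun h =>
  absurd (le_MX h) (not_le.2 (M_gt_MX k))

lemma s_lt_M (k : ℕ) : s k < (F k).headI * s k * (MX (F k) + 1) := by
  have h1 : 1 ≤ (F k).headI := mem_F_pos k _ (headI_mem (F_ne_nil k))
  have h2 := one_le_s k
  have h3 : 1 ≤ MX (F k) := le_trans h1 (headI_le_MX k)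
  calc s k = 1 * s k * 1 := by ring
    _ < (F k).headI * s k * (MX (F k) + 1) := by
        apply Nat.mul_lt_mul_of_le_of_lt
        · exact Nat.mul_le_mul (by omega) le_rfl
        · omega
        · positivity

lemma nodup_F : ∀ k, (F k).Nodup := by
  intro k
  induction k with
  | zero => simp [F]
  | succ k ih =>
    rw [F_succ]
    refine List.nodup_cons.2 ⟨?_, List.nodup_cons.2 ⟨M_not_mem k, ih⟩⟩
    simp only [List.mem_cons]
    push_neg
    exact ⟨Nat.ne_of_lt (s_lt_M k), s_not_mem k⟩

def R (a b : ℕ) : Prop := a ∣ b ∨ b ∣ a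

lemma chain_F : ∀ k, List.Chain' R (F k) := by
  intro k
  induction k with
  | zero => simp [F, List.Chain']
  | succ k ih =>
    rw [F_succ]
    refine List.isChain_cons_cons.2 ⟨Or.inl ⟨(F k).headI * (MX (F k) + 1), by ring⟩, ?_⟩
    rcases List.exists_cons_of_ne_nil (F_ne_nil k) with ⟨a, t, ha⟩
    rw [ha]
    refine List.isChain_cons_cons.2 ⟨Or.inr ⟨s k * (MX (F k) + 1), by rw [ha]; simp [List.headI]; ring⟩, ?_⟩
    rw [← ha]; exact ih

lemma s_strict (k : ℕ) : s k < s (k + 1) := by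
  have h1 : s (k+1) ∉ F (k+1) := s_not_mem (k+1)
  rw [F_succ] at h1
  simp only [List.mem_cons] at h1
  push_neg at h1
  have hle : s k ≤ s (k + 1) := by
    by_contra h
    push_neg at h
    have := Nat.find_min (exists_fresh (F k)) h
    push_neg at this
    exact h1.2.2 (this (one_le_s (k+1)))
  exact lt_of_le_of_ne hle (fun e => h1.1 e.symm)

lemma s_ge (k : ℕ) : k + 1 ≤ s k := by
  induction k with
  | zero => exact one_le_s 0
  | succ k ih => have := s_strict k; omega

lemma mem_F_of_lt_s {m k : ℕ} (h1 : 1 ≤ m) (h2 : m < s k) : m ∈ F k := by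
  have := Nat.find_min (exists_fresh (F k)) h2
  push_neg at this
  exact this h1

lemma mem_F (m : ℕ) (h : 1 ≤ m) : m ∈ F m :=
  mem_F_of_lt_s h (lt_of_lt_of_le (Nat.lt_succ_self m) (s_ge m))

-- the chain as a sequence
noncomputable def a (n : ℕ) : ℕ := (F n).reverse.getD n 0

lemma rev_F_succ (k : ℕ) :
    (F (k+1)).reverse = (F k).reverse ++ [(F k).headI * s k * (MX (F k) + 1), s k] := by
  rw [F_succ]; simp

lemma getD_stable {n k : ℕ} (h : n < 2 * k + 1) :
    (F (k+1)).reverse.getD n 0 = (F k).reverse.getD n 0 := by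
  rw [rev_F_succ]
  rw [List.getD_append]
  simp [length_F, h]

lemma getD_stable' {n k : ℕ} (j : ℕ) (h : n < 2 * k + 1) :
    (F (k + j)).reverse.getD n 0 = (F k).reverse.getD n 0 := by
  induction j with
  | zero => rfl
  | succ j ih =>
    have : k + (j + 1) = (k + j) + 1 := by omega
    rw [this, getD_stable (by omega), ih]

lemma a_eq {n k : ℕ} (h : n ≤ 2 * k) : a n = (F k).reverse.getD n 0 := by
  rcases le_total n k with h' | h'
  · have : k = n + (k - n) := by omega
    rw [a, this, getD_stable' _ (by omega)]
  · have : n = k + (n - k) := by omega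
    rw [a, this, getD_stable' _ (by omega)]

lemma a_mem {n k : ℕ} (h : n ≤ 2 * k) : a n ∈ F k := by
  rw [a_eq h]
  have hl : n < (F k).reverse.length := by simp [length_F]; omega
  rw [List.getD_eq_getElem _ _ hl]
  exact (List.mem_reverse).1 (List.getElem_mem _)

lemma a_pos (n : ℕ) : 1 ≤ a n := mem_F_pos n _ (a_mem (by omega))

lemma a_inj : Function.Injective a := by
  intro n m h
  by_contra hne
  set k := max n m with hk
  have hn : a n = (F k).reverse.getD n 0 := a_eq (by omega : n ≤ 2 * k)
  have hm : a m = (F k).reverse.getD m 0 := a_eq (by omega : m ≤ 2 * k)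
  have hln : n < (F k).reverse.length := by simp [length_F]; omega
  have hlm : m < (F k).reverse.length := by simp [length_F]; omega
  rw [hn, hm, List.getD_eq_getElem _ _ hln, List.getD_eq_getElem _ _ hlm] at h
  have hnd : (F k).reverse.Nodup := List.nodup_reverse.2 (nodup_F k)
  have := (List.Nodup.get_inj_iff hnd (i := ⟨n, hln⟩) (j := ⟨m, hlm⟩)).mp h
  rw [Fin.mk.injEq] at this
  exact hne this

lemma a_adj (n : ℕ) : R (a n) (a (n + 1)) := by
  have h1 : a n = (F (n+1)).reverse.getD n 0 := a_eq (by omega)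
  have h2 : a (n+1) = (F (n+1)).reverse.getD (n+1) 0 := a_eq (by omega)
  have hc : List.Chain' R (F (n+1)).reverse := by
    refine List.isChain_reverse.2 ?_
    have : List.Chain' (flip R) (F (n+1)) := by
      have := chain_F (n+1)
      apply List.IsChain.imp _ this
      intro a b h
      exact h.symm
    exact this
  have hln : n + 1 < (F (n+1)).reverse.length := by simp [length_F]
  have := List.isChain_iff_getElem.1 hc n (by omega)
  rw [h1, h2, List.getD_eq_getElem _ _ (by omega), List.getD_eq_getElem _ _ hln]
  exact this

lemma a_surj {m : ℕ} (h : 1 ≤ m) : ∃ n, a n = m := by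
  have hm := mem_F m h
  have : m ∈ (F m).reverse := List.mem_reverse.2 hm
  rcases List.get_of_mem this with ⟨i, hi⟩
  refine ⟨i, ?_⟩
  have hik : (i : ℕ) ≤ 2 * m := by
    have := i.2
    simp [length_F] at this
    omega
  rw [a_eq hik, List.getD_eq_getElem _ _ i.2]
  exact hi

end ChainPerm

theorem chain_permutation_exists :
    ∃ f : ℕ+ → ℕ+, Function.Bijective f ∧
      ∀ n : ℕ+, f n ∣ f (n + 1) ∨ f (n + 1) ∣ f n := by
  refine ⟨fun n => ⟨ChainPerm.a ((n : ℕ) - 1), ChainPerm.a_pos _⟩, ⟨?_, ?_⟩, ?_⟩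
  · intro n m h
    have h2 : ChainPerm.a ((n : ℕ) - 1) = ChainPerm.a ((m : ℕ) - 1) :=
      congrArg Subtype.val h
    have := ChainPerm.a_inj h2
    have hn := n.pos
    have hm := m.pos
    apply PNat.coe_injective
    omega
  · intro m
    rcases ChainPerm.a_surj m.2 with ⟨j, hj⟩
    refine ⟨⟨j + 1, by omega⟩, ?_⟩
    simp [hj]
    rfl
  · intro n
    have hadj := ChainPerm.a_adj ((n : ℕ) - 1)
    have hn : (n : ℕ) - 1 + 1 = ((n + 1 : ℕ+) : ℕ) - 1 := by
      have := n.pos; rw [PNat.add_coe, PNat.one_coe]; omega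
    rcases hadj with h | h
    · left
      apply PNat.dvd_iff.2
      simpa [hn] using h
    · right
      apply PNat.dvd_iff.2
      simpa [hn] using h
end

section
/- For every integer n ≥ 2, F(n)/n equals the maximum over consecutive divisors of n of the ratio d_{i+1}(n)/d_i(n), where 1 = d_1(n) < d_2(n) < ... < d_{τ(n)}(n) = n is the increasing sequence of divisors of n. Equivalently, F(n) · (d_i(n)) ≥ n · d_{i+1}(n) for all i with equality for some i. -/
def Fdiv (n : ℕ) : ℕ :=
  if n = 1 then 1 else (n.divisors.filter (fun d => 1 < d)).sup (fun d => d * d.minFac)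

lemma Fdiv_le {n d : ℕ} (hn : 2 ≤ n) (hd : d ∣ n) (hd1 : 1 < d) :
    d * d.minFac ≤ Fdiv n := by
  have h1 : n ≠ 1 := by omega
  rw [Fdiv, if_neg h1]
  have hmem : d ∈ n.divisors.filter (fun d => 1 < d) := by
    simp only [Finset.mem_filter, Nat.mem_divisors]
    exact ⟨⟨hd, by omega⟩, hd1⟩
  exact Finset.le_sup (f := fun d => d * d.minFac) hmem

lemma exists_Fdiv_eq {n : ℕ} (hn : 2 ≤ n) :
    ∃ d, d ∣ n ∧ 1 < d ∧ Fdiv n = d * d.minFac := by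
  have h1 : n ≠ 1 := by omega
  have hne : (n.divisors.filter (fun d => 1 < d)).Nonempty := by
    refine ⟨n, ?_⟩
    simp only [Finset.mem_filter, Nat.mem_divisors]
    exact ⟨⟨dvd_refl n, by omega⟩, by omega⟩
  obtain ⟨d, hd, hEq⟩ := Finset.exists_mem_eq_sup _ hne (fun d => d * d.minFac)
  simp only [Finset.mem_filter, Nat.mem_divisors] at hd
  exact ⟨d, hd.1.1, hd.2, by rw [Fdiv, if_neg h1]; exact hEq⟩

lemma Fdiv_ge_two_mul {n : ℕ} (hn : 2 ≤ n) : 2 * n ≤ Fdiv n := by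
  have := Fdiv_le (n := n) (d := n) hn (dvd_refl n) (by omega)
  have h2 : 2 ≤ n.minFac := (Nat.minFac_prime (by omega)).two_le
  calc 2 * n ≤ n.minFac * n := Nat.mul_le_mul_right _ h2
    _ = n * n.minFac := Nat.mul_comm _ _
    _ ≤ Fdiv n := this

lemma minFac_pow_mul {P d : ℕ} (e : ℕ) (hP : P.Prime) (he : 0 < e) (hd : 1 < d)
    (hdP : d.minFac ≤ P) : (P ^ e * d).minFac = d.minFac := by
  have hq : d.minFac.Prime := Nat.minFac_prime (by omega)
  have h1 : (P ^ e * d).minFac ≤ d.minFac :=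
    Nat.minFac_le_of_dvd hq.two_le (Dvd.dvd.mul_left d.minFac_dvd _)
  have hw1 : 1 < P ^ e * d := by
    have : 2 ≤ P ^ e := le_trans hP.two_le (Nat.le_self_pow (by omega) P)
    nlinarith
  have hr : (P ^ e * d).minFac.Prime := Nat.minFac_prime (by omega)
  rcases hr.dvd_mul.mp (Nat.minFac_dvd (P ^ e * d)) with h | h
  · have hrP : (P ^ e * d).minFac = P :=
      (Nat.prime_dvd_prime_iff_eq hr hP).mp (hr.dvd_of_dvd_pow h)
    omega
  · have h2 : d.minFac ≤ (P ^ e * d).minFac := Nat.minFac_le_of_dvd hr.two_le h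
    omega

lemma lemD {z : ℕ} (hz : 2 ≤ z)
    (hA : ∀ a, a ∣ z → a < z → ∃ b, b ∣ z ∧ a < b ∧ z * b ≤ Fdiv z * a) :
    ∀ x, 1 ≤ x → x ≤ z → ∃ m, m ∣ z ∧ m ≤ x ∧ z * x ≤ Fdiv z * m := by
  intro x hx1 hxz
  have hz0 : z ≠ 0 := by omega
  have hne : (z.divisors.filter (fun d => d ≤ x)).Nonempty := by
    refine ⟨1, ?_⟩
    simp only [Finset.mem_filter, Nat.mem_divisors]
    exact ⟨⟨one_dvd z, hz0⟩, hx1⟩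
  set m := (z.divisors.filter (fun d => d ≤ x)).max' hne with hm
  have hmmem := Finset.max'_mem _ hne
  rw [← hm] at hmmem
  simp only [Finset.mem_filter, Nat.mem_divisors] at hmmem
  obtain ⟨⟨hmdvd, -⟩, hmx⟩ := hmmem
  refine ⟨m, hmdvd, hmx, ?_⟩
  by_cases hmz : m < z
  · obtain ⟨b, hbz, hmb, hble⟩ := hA m hmdvd hmz
    have hxb : x < b := by
      by_contra h
      push_neg at h
      have hbm : b ≤ m := by
        apply Finset.le_max' _ b
        simp only [Finset.mem_filter, Nat.mem_divisors]
        exact ⟨⟨hbz, hz0⟩, h⟩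
      omega
    have : z * x < z * b := mul_lt_mul_of_pos_left hxb (by omega)
    omega
  · have hmzeq : m = z := by
      have := Nat.le_of_dvd (by omega) hmdvd
      omega
    have hxez : x = z := by omega
    have h2 := Fdiv_ge_two_mul hz
    calc z * x = x * z := Nat.mul_comm _ _
      _ ≤ Fdiv z * z := Nat.mul_le_mul (by omega) (le_refl z)
      _ = Fdiv z * m := by rw [hmzeq]

lemma lemA (n : ℕ) : 2 ≤ n → ∀ a, a ∣ n → a < n → ∃ b, b ∣ n ∧ a < b ∧ n * b ≤ Fdiv n * a := by
  induction n using Nat.strong_induction_on with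
  | _ n IH =>
    intro hn a ha hax
    have hn0 : n ≠ 0 := by omega
    have ha0 : 0 < a := Nat.pos_of_dvd_of_pos ha (by omega)
    have hPne : n.primeFactors.Nonempty := Nat.nonempty_primeFactors.mpr (by omega)
    set P := n.primeFactors.max' hPne with hPdef
    have hPmem : P ∈ n.primeFactors := Finset.max'_mem _ hPne
    have hPp : P.Prime := Nat.prime_of_mem_primeFactors hPmem
    have hPdvd : P ∣ n := Nat.dvd_of_mem_primeFactors hPmem
    have hP2 : 2 ≤ P := hPp.two_le
    have hPmax : ∀ q, q.Prime → q ∣ n → q ≤ P := fun q hq hqn =>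
      Finset.le_max' _ q (Nat.mem_primeFactors.mpr ⟨hq, hqn, hn0⟩)
    obtain ⟨e, m', he1, hnm', hPm'⟩ :
        ∃ e m', 1 ≤ e ∧ P ^ e * m' = n ∧ ¬ P ∣ m' := by
      refine ⟨n.factorization P, n / P ^ n.factorization P,
        hPp.factorization_pos_of_dvd hn0 hPdvd,
        Nat.ordProj_mul_ordCompl_eq_self n P,
        Nat.not_dvd_ordCompl hPp hn0⟩
    obtain ⟨E, hE⟩ : ∃ E, e = E + 1 := ⟨e - 1, by omega⟩
    subst hE
    have hm'pos : 0 < m' := by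
      rcases Nat.eq_zero_or_pos m' with h | h
      · rw [h, mul_zero] at hnm'; omega
      · exact h
    have hPepos : 0 < P ^ (E + 1) := by positivity
    have hPe2 : 2 ≤ P ^ (E + 1) := le_trans hP2 (Nat.le_self_pow (by omega) P)
    have hm'lt : m' < n := by nlinarith
    have hm'dvd : m' ∣ n := ⟨P ^ (E + 1), by rw [← hnm']; ring⟩
    -- m = P^E * m'
    set m := P ^ E * m' with hmdef
    have hnm : P * m = n := by rw [hmdef, ← hnm']; ring
    have hmdvd : m ∣ n := ⟨P, by rw [← hnm]; ring⟩
    have hmpos : 0 < m := by positivity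
    have hmlt : m < n := by nlinarith
    have hsmall : ∀ q, q.Prime → q ∣ m' → q < P := by
      intro q hq hqm'
      have hqn : q ∣ n := hqm'.trans hm'dvd
      rcases lt_or_eq_of_le (hPmax q hq hqn) with h | h
      · exact h
      · exact absurd (h ▸ hqm') hPm'
    -- F transfer lemma 1 : for divisors of m'
    have hF1 : ∀ d', d' ∣ m' → 1 < d' → P ^ (E + 1) * (d' * d'.minFac) ≤ Fdiv n := by
      intro d' hd' hd'1
      have hq : d'.minFac.Prime := Nat.minFac_prime (by omega)
      have hqlt : d'.minFac < P := hsmall _ hq (d'.minFac_dvd.trans hd')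
      have hmf : (P ^ (E + 1) * d').minFac = d'.minFac :=
        minFac_pow_mul (E + 1) hPp (by omega) hd'1 (le_of_lt hqlt)
      have hwdvd : P ^ (E + 1) * d' ∣ n := by
        rw [← hnm']; exact Nat.mul_dvd_mul_left _ hd'
      have hw1 : 1 < P ^ (E + 1) * d' := by nlinarith
      have hle := Fdiv_le hn hwdvd hw1
      rw [hmf] at hle
      calc P ^ (E + 1) * (d' * d'.minFac) = P ^ (E + 1) * d' * d'.minFac := by ring
        _ ≤ Fdiv n := hle
    have hFm' : 2 ≤ m' → P ^ (E + 1) * Fdiv m' ≤ Fdiv n := by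
      intro hm'2
      obtain ⟨d', hd'dvd, hd'1, hd'eq⟩ := exists_Fdiv_eq hm'2
      rw [hd'eq]
      exact hF1 d' hd'dvd hd'1
    -- F transfer lemma 2 : for divisors of m
    have hF2 : ∀ d', d' ∣ m → 1 < d' → P * (d' * d'.minFac) ≤ Fdiv n := by
      intro d' hd' hd'1
      have hq : d'.minFac.Prime := Nat.minFac_prime (by omega)
      have hqle : d'.minFac ≤ P :=
        hPmax _ hq (d'.minFac_dvd.trans (hd'.trans hmdvd))
      have hmf : (P ^ 1 * d').minFac = d'.minFac :=
        minFac_pow_mul 1 hPp (by omega) hd'1 hqle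
      rw [pow_one] at hmf
      have hwdvd : P * d' ∣ n := by
        rw [← hnm]; exact Nat.mul_dvd_mul_left _ hd'
      have hw1 : 1 < P * d' := by nlinarith
      have hle := Fdiv_le hn hwdvd hw1
      rw [hmf] at hle
      calc P * (d' * d'.minFac) = P * d' * d'.minFac := by ring
        _ ≤ Fdiv n := hle
    have hFm : 2 ≤ m → P * Fdiv m ≤ Fdiv n := by
      intro hm2
      obtain ⟨d', hd'dvd, hd'1, hd'eq⟩ := exists_Fdiv_eq hm2
      rw [hd'eq]
      exact hF2 d' hd'dvd hd'1
    have hFP : P ^ (E + 2) ≤ Fdiv n := by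
      have hmfP : (P ^ (E + 1)).minFac = P := Nat.Prime.pow_minFac hPp (by omega)
      have hdvd : P ^ (E + 1) ∣ n := ⟨m', hnm'.symm⟩
      have := Fdiv_le hn hdvd (by omega)
      rw [hmfP] at this
      calc P ^ (E + 2) = P ^ (E + 1) * P := by ring
        _ ≤ Fdiv n := this
    -- decompose a
    obtain ⟨t, w, hw, hPw, hta⟩ : ∃ t w, a = P ^ t * w ∧ ¬ P ∣ w ∧ t ≤ E + 1 := by
      refine ⟨a.factorization P, a / P ^ a.factorization P,
        (Nat.ordProj_mul_ordCompl_eq_self a P).symm,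
        Nat.not_dvd_ordCompl hPp (by omega), ?_⟩
      by_contra hgt
      push_neg at hgt
      have h1 : P ^ (E + 2) ∣ a := by
        calc P ^ (E + 2) ∣ P ^ a.factorization P := pow_dvd_pow P (by omega)
          _ ∣ a := Nat.ordProj_dvd a P
      have h2 : P ^ (E + 2) ∣ P ^ (E + 1) * m' := by rw [hnm']; exact h1.trans ha
      have h3 : P ∣ m' := by
        rcases h2 with ⟨c, hc⟩
        refine ⟨c, ?_⟩
        have : P ^ (E + 1) * m' = P ^ (E + 1) * (P * c) := by
          rw [hc]; ring
        exact Nat.eq_of_mul_eq_mul_left hPepos this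
      exact hPm' h3
    have hwm' : w ∣ m' := by
      have hwn : w ∣ n := by
        refine dvd_trans ?_ ha
        exact ⟨P ^ t, by rw [hw]; ring⟩
      have hcop : Nat.Coprime w (P ^ (E + 1)) :=
        Nat.Coprime.pow_right _ ((Nat.Prime.coprime_iff_not_dvd hPp).mpr hPw).symm
      exact hcop.dvd_of_dvd_mul_left (by rw [← hnm'] at hwn; exact hwn)
    have hwpos : 0 < w := by
      rcases Nat.eq_zero_or_pos w with h | h
      · rw [h, mul_zero] at hw; omega
      · exact h
    by_cases hte : t = E + 1
    · -- case (ii) : a = P^(E+1) * w with w | m', w < m'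
      subst hte
      have hum' : w < m' := by
        have h1 : P ^ (E + 1) * w < P ^ (E + 1) * m' := by
          rw [← hw, hnm']; exact hax
        exact lt_of_mul_lt_mul_left h1 (Nat.zero_le _)
      have hm'2 : 2 ≤ m' := by omega
      obtain ⟨b', hb'm', hwb', hb'le⟩ := IH m' hm'lt hm'2 w hwm' hum'
      refine ⟨P ^ (E + 1) * b', ?_, ?_, ?_⟩
      · rw [← hnm']; exact Nat.mul_dvd_mul_left _ hb'm'
      · rw [hw]; exact mul_lt_mul_of_pos_left hwb' (by positivity)
      · have h1 := hFm' hm'2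
        calc n * (P ^ (E + 1) * b')
            = P ^ (E + 1) * P ^ (E + 1) * (m' * b') := by rw [← hnm']; ring
          _ ≤ P ^ (E + 1) * P ^ (E + 1) * (Fdiv m' * w) := Nat.mul_le_mul_left _ hb'le
          _ = (P ^ (E + 1) * Fdiv m') * (P ^ (E + 1) * w) := by ring
          _ ≤ Fdiv n * (P ^ (E + 1) * w) := Nat.mul_le_mul_right _ h1
          _ = Fdiv n * a := by rw [← hw]
    · -- t ≤ E : a ∣ m
      have htE : t ≤ E := by omega
      have ham : a ∣ m := by
        rw [hw, hmdef]
        exact Nat.mul_dvd_mul (pow_dvd_pow P htE) hwm'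
      by_cases hamlt : a < m
      · obtain ⟨b, hbm, hab, hble⟩ := IH m hmlt (by omega) a ham hamlt
        refine ⟨b, hbm.trans hmdvd, hab, ?_⟩
        have hm2 : 2 ≤ m := by omega
        have := hFm hm2
        calc n * b = P * (m * b) := by rw [← hnm]; ring
          _ ≤ P * (Fdiv m * a) := by
              apply Nat.mul_le_mul_left
              exact hble
          _ = (P * Fdiv m) * a := by ring
          _ ≤ Fdiv n * a := Nat.mul_le_mul_right _ this
      · -- a = m
        have haem : a = m := by
          have := Nat.le_of_dvd hmpos ham
          omega
        subst haem
        by_cases hPm'lt : m' < P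
        · -- b = P^(E+1)
          refine ⟨P ^ (E + 1), ⟨m', hnm'.symm⟩, ?_, ?_⟩
          · rw [hmdef]
            calc P ^ E * m' < P ^ E * P := mul_lt_mul_of_pos_left hPm'lt (by positivity)
              _ = P ^ (E + 1) := by ring
          · calc n * P ^ (E + 1) = P ^ (E + 2) * (P ^ E * m') := by rw [← hnm']; ring
              _ ≤ Fdiv n * (P ^ E * m') := Nat.mul_le_mul_right _ hFP
              _ = Fdiv n * m := by rw [hmdef]
        · -- P < m' : use lemD on m'
          have hPltm' : P < m' := by
            rcases lt_or_eq_of_le (not_lt.mp hPm'lt) with h | h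
            · exact h
            · exact absurd (dvd_of_eq h) hPm'
          have hm'2 : 2 ≤ m' := by omega
          obtain ⟨m₀, hm₀dvd, hm₀le, hm₀ineq⟩ :=
            lemD hm'2 (fun a' ha' hax' => IH m' hm'lt hm'2 a' ha' hax') P (by omega) (by omega)
          have hm₀P : m₀ < P := by
            rcases lt_or_eq_of_le hm₀le with h | h
            · exact h
            · exact absurd (h ▸ hm₀dvd) hPm'
          obtain ⟨k, hk⟩ := hm₀dvd
          have hm₀pos : 0 < m₀ := by
            rcases Nat.eq_zero_or_pos m₀ with h | h
            · rw [h] at hk; simp at hk; omega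
            · exact h
          have hkpos : 0 < k := by
            rcases Nat.eq_zero_or_pos k with h | h
            · rw [h, mul_zero] at hk; omega
            · exact h
          have hkP : k * P ≤ Fdiv m' := by
            have : m₀ * (k * P) ≤ m₀ * Fdiv m' := by
              calc m₀ * (k * P) = m' * P := by rw [hk]; ring
                _ ≤ Fdiv m' * m₀ := hm₀ineq
                _ = m₀ * Fdiv m' := by ring
            exact Nat.le_of_mul_le_mul_left this hm₀pos
          refine ⟨P ^ (E + 1) * k, ⟨m₀, by rw [← hnm', hk]; ring⟩, ?_, ?_⟩
          · rw [hmdef, hk]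
            calc P ^ E * (m₀ * k) = (P ^ E * k) * m₀ := by ring
              _ < (P ^ E * k) * P := mul_lt_mul_of_pos_left hm₀P (by positivity)
              _ = P ^ (E + 1) * k := by ring
          · have h1 : P ^ (E + 1) * Fdiv m' ≤ Fdiv n := hFm' hm'2
            calc n * (P ^ (E + 1) * k)
                = (k * P) * (P ^ E * P ^ (E + 1) * m') := by rw [← hnm']; ring
              _ ≤ Fdiv m' * (P ^ E * P ^ (E + 1) * m') := Nat.mul_le_mul_right _ hkP
              _ = (P ^ (E + 1) * Fdiv m') * (P ^ E * m') := by ring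
              _ ≤ Fdiv n * (P ^ E * m') := Nat.mul_le_mul_right _ h1
              _ = Fdiv n * m := by rw [hmdef]

lemma lemB {n : ℕ} (hn : 2 ≤ n) :
    ∃ a b, a ∣ n ∧ b ∣ n ∧ a < b ∧ (∀ c, c ∣ n → a < c → b ≤ c) ∧
      n * b = Fdiv n * a := by
  obtain ⟨d, hdn, hd1, hF⟩ := exists_Fdiv_eq hn
  set p := d.minFac with hp
  have hpp : p.Prime := Nat.minFac_prime (by omega)
  have hpd : p ∣ d := d.minFac_dvd
  have hpn : p ∣ n := hpd.trans hdn
  have hppos : 0 < p := hpp.pos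
  set a := n / p with hadef
  have hap : a * p = n := Nat.div_mul_cancel hpn
  have han : a ∣ n := ⟨p, hap.symm⟩
  have hdp : n < d * p := by
    have h1 := Fdiv_ge_two_mul hn
    rw [hF] at h1
    omega
  have hab : a < d := by
    have : a * p < d * p := by rw [hap]; exact hdp
    exact Nat.lt_of_mul_lt_mul_right this
  refine ⟨a, d, han, hdn, hab, ?_, ?_⟩
  · intro c hcn hac
    by_contra hcd
    push_neg at hcd
    set c' := n / c with hc'def
    have hcpos : 0 < c := Nat.pos_of_dvd_of_pos hcn (by omega)
    have hc'c : c' * c = n := Nat.div_mul_cancel hcn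
    have hc'n : c' ∣ n := ⟨c, hc'c.symm⟩
    have hc'1 : 1 < c' := by
      rcases Nat.lt_or_ge c' 2 with h | h
      · interval_cases c'
        · omega
        · simp at hc'c
          have hdlen : d ≤ n := Nat.le_of_dvd (by omega) hdn
          omega
      · exact h
    have hc'p : c' < p := by
      by_contra h
      push_neg at h
      nlinarith [hc'c, hap, hac, hppos]
    have hcop : Nat.Coprime c' d := by
      by_contra h
      obtain ⟨q, hq, hqc', hqd⟩ := Nat.Prime.not_coprime_iff_dvd.mp h
      have h1 : q ≤ c' := Nat.le_of_dvd (by omega) hqc'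
      have h2 : p ≤ q := Nat.minFac_le_of_dvd hq.two_le hqd
      omega
    have hmul : c' * d ∣ n := hcop.mul_dvd_of_dvd_of_dvd hc'n hdn
    have hle : c' * d ≤ n := Nat.le_of_dvd (by omega) hmul
    have : c' * d < c' * d := by
      calc c' * d ≤ n := hle
        _ = c' * c := hc'c.symm
        _ < c' * d := mul_lt_mul_of_pos_left hcd (by omega)
    omega
  · rw [hF, ← hap]; ring

theorem F_div_n_eq_max_ratio (n : ℕ) (hn : 2 ≤ n) :
    (∀ i : ℕ, ∀ h : i + 1 < (n.divisors.sort (· ≤ ·)).length,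
        n * (n.divisors.sort (· ≤ ·))[i + 1] ≤
          Fdiv n * (n.divisors.sort (· ≤ ·))[i]'(by omega)) ∧
    ∃ i : ℕ, ∃ h : i + 1 < (n.divisors.sort (· ≤ ·)).length,
        n * (n.divisors.sort (· ≤ ·))[i + 1] =
          Fdiv n * (n.divisors.sort (· ≤ ·))[i]'(by omega) := by
  have hn0 : n ≠ 0 := by omega
  set L := n.divisors.sort (· ≤ ·) with hL
  have hsorted : List.Pairwise (· < ·) L := n.divisors.sortedLT_sort.pairwise
  have hmono : ∀ i j (hi : i < L.length) (hj : j < L.length), i < j → L[i] < L[j] := by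
    intro i j hi hj hij
    exact List.pairwise_iff_getElem.mp hsorted i j hi hj hij
  have hmem : ∀ c, c ∈ L ↔ c ∣ n := by
    intro c
    rw [hL, Finset.mem_sort, Nat.mem_divisors]
    constructor
    · exact fun h => h.1
    · exact fun h => ⟨h, hn0⟩
  have hidx : ∀ c, c ∣ n → ∃ j, ∃ hj : j < L.length, L[j]'hj = c := by
    intro c hc
    exact List.mem_iff_getElem.mp ((hmem c).mpr hc)
  constructor
  · intro i h
    have hi : i < L.length := Nat.lt_of_succ_lt h
    have haL : L[i] ∣ n := (hmem _).mp (L.getElem_mem hi)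
    have hbL : L[i+1] ∣ n := (hmem _).mp (L.getElem_mem h)
    have hab : L[i] < L[i+1] := hmono i (i+1) hi h (by omega)
    have haln : L[i] < n := by
      have := Nat.le_of_dvd (by omega) hbL
      omega
    obtain ⟨b, hbn, hlb, hble⟩ := lemA n hn L[i] haL haln
    obtain ⟨j, hj, hjb⟩ := hidx b hbn
    have hij : i < j := by
      by_contra hc
      push_neg at hc
      rcases Nat.lt_or_ge j i with h' | h'
      · have := hmono j i hj hi h'
        omega
      · have : j = i := by omega
        subst this
        omega
    have hbge : L[i+1] ≤ b := by
      rcases Nat.lt_or_ge (i+1) j with h' | h'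
      · have := hmono (i+1) j h hj h'
        omega
      · have : j = i + 1 := by omega
        subst this
        omega
    calc n * L[i+1] ≤ n * b := Nat.mul_le_mul_left _ hbge
      _ ≤ Fdiv n * L[i] := hble
  · obtain ⟨a, b, han, hbn, hab, hnext, heq⟩ := lemB hn
    obtain ⟨i, hi, hia⟩ := hidx a han
    obtain ⟨j, hj, hjb⟩ := hidx b hbn
    have hij : i < j := by
      by_contra hc
      push_neg at hc
      rcases Nat.lt_or_ge j i with h' | h'
      · have := hmono j i hj hi h'
        omega
      · have : j = i := by omega
        subst this
        omega
    have hji : j = i + 1 := by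
      by_contra hc
      have h1 : i + 1 < j := by omega
      have h2 : i + 1 < L.length := by omega
      have hc1 : L[i] < L[i+1] := hmono i (i+1) hi h2 (by omega)
      have hc2 : L[i+1] < L[j] := hmono (i+1) j h2 hj h1
      have hcd : L[i+1] ∣ n := (hmem _).mp (L.getElem_mem h2)
      have := hnext L[i+1] hcd (by omega)
      omega
    subst hji
    exact ⟨i, hj, by rw [hjb, hia]; exact heq⟩
end

section
/- Every squarefree integer m ≥ 1 with F(m) ≤ p² (p a prime) satisfies m ≤ 2p² and P⁺(m) ≤ p, where P⁺(m) is the largest prime factor of m (with P⁺(1) = 1). -/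
def Pplus (n : ℕ) : ℕ := if n = 1 then 1 else n.primeFactors.sup id

theorem mul_minFac_le_Fdiv {n d : ℕ} (hn : n ≠ 0) (hdn : d ∣ n) (hd : 1 < d) :
    d * d.minFac ≤ Fdiv n := by
  have hn1 : n ≠ 1 := by
    rintro rfl
    exact absurd (Nat.le_of_dvd one_pos hdn) (by omega)
  rw [Fdiv, if_neg hn1]
  exact Finset.le_sup (f := fun d : ℕ => d * d.minFac) (by simp [hdn, hn, hd])

theorem le_Fdiv (n : ℕ) : n ≤ Fdiv n := by
  rcases lt_trichotomy n 1 with h | rfl | h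
  · omega
  · simp [Fdiv]
  · calc n ≤ n * n.minFac := Nat.le_mul_of_pos_right n n.minFac_pos
      _ ≤ Fdiv n := mul_minFac_le_Fdiv (by omega) dvd_rfl h

theorem sq_le_Fdiv_of_prime_dvd {n q : ℕ} (hn : n ≠ 0) (hq : q.Prime) (hqn : q ∣ n) :
    q ^ 2 ≤ Fdiv n := by
  simpa [sq, hq.minFac_eq] using mul_minFac_le_Fdiv hn hqn hq.one_lt

theorem Pplus_sq_le_Fdiv (n : ℕ) : Pplus n ^ 2 ≤ Fdiv n := by
  unfold Pplus
  split_ifs with h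
  · simp [h, Fdiv]
  · refine Nat.le_sqrt'.mp (Finset.sup_le fun q hq => Nat.le_sqrt'.mpr ?_)
    obtain ⟨hq, hqn, hn⟩ := Nat.mem_primeFactors.mp hq
    exact sq_le_Fdiv_of_prime_dvd hn hq hqn

theorem squarefree_dense_bounds_general (p : ℕ) (m : ℕ) (hF : Fdiv m ≤ p ^ 2) :
    m ≤ 2 * p ^ 2 ∧ Pplus m ≤ p :=
  ⟨by linarith [le_Fdiv m],
    (Nat.pow_le_pow_iff_left two_ne_zero).mp ((Pplus_sq_le_Fdiv m).trans hF)⟩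

theorem squarefree_dense_bounds (p : ℕ) (hp : p.Prime) (m : ℕ) (hm : 1 ≤ m)
    (hsf : Squarefree m) (hF : Fdiv m ≤ p ^ 2) :
    m ≤ 2 * p ^ 2 ∧ Pplus m ≤ p :=
  squarefree_dense_bounds_general p m hF
end

section
/- There exists a chain-permutation f : ℕ+ → ℕ+ (bijection with consecutive values in divisibility relation) such that limsup_{n → ∞} f(n)/n² = 1/4. -/
noncomputable def cc : ℕ → ℕ
  | 0 => 1
  | (k+1) => sInf {m | cc k < m ∧ ∀ j, 0 < j → j + 1 ≤ k → cc j * cc (j+1) ≠ m}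

def S (k : ℕ) : Set ℕ := {m | cc k < m ∧ ∀ j, 0 < j → j + 1 ≤ k → cc j * cc (j+1) ≠ m}

lemma cc_succ (k : ℕ) : cc (k+1) = sInf (S k) := by rw [cc]; rfl

lemma S_nonempty (k : ℕ) : (S k).Nonempty := by
  refine ⟨cc k + 1 + ∑ j ∈ Finset.range k, cc j * cc (j+1), ?_, ?_⟩
  · omega
  · intro j hj hjk
    have : cc j * cc (j+1) ≤ ∑ i ∈ Finset.range k, cc i * cc (i+1) :=
      Finset.single_le_sum (f := fun i => cc i * cc (i+1)) (fun i _ => Nat.zero_le _)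
        (Finset.mem_range.mpr (by omega))
    omega

lemma cc_mem (k : ℕ) : cc (k+1) ∈ S k := by rw [cc_succ]; exact Nat.sInf_mem (S_nonempty k)

lemma cc_le_of_mem {k m : ℕ} (h : m ∈ S k) : cc (k+1) ≤ m := by
  rw [cc_succ]; exact Nat.sInf_le h

lemma cc_lt_succ (k : ℕ) : cc k < cc (k+1) := (cc_mem k).1

lemma cc_mono : StrictMono cc := strictMono_nat_of_lt_succ cc_lt_succ

lemma cc_zero : cc 0 = 1 := by rw [cc]

lemma cc_ge (k : ℕ) : k + 1 ≤ cc k := by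
  induction k with
  | zero => simp [cc_zero]
  | succ n ih => have := cc_lt_succ n; omega

lemma cc_not_prod (k : ℕ) : ∀ j, 0 < j → cc j * cc (j+1) ≠ cc k := by
  intro j hj
  match k with
  | 0 => have h1 := cc_ge j; have h2 := cc_ge (j+1); rw [cc_zero]; nlinarith
  | (k'+1) =>
    by_cases hle : j + 1 ≤ k'
    · exact (cc_mem k').2 j hj hle
    · -- j ≥ k', so cc j * cc (j+1) ≥ cc k' * cc (k'+1) ≥ 2 * cc (k'+1) > cc (k'+1)
      have hjk : k' ≤ j := by omega
      have h1 : cc (k'+1) ≤ cc (j+1) := cc_mono.le_iff_le.mpr (by omega)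
      have h2 : 2 ≤ cc j := le_trans (by have := cc_ge j; omega) (le_refl _)
      have h3 : 1 ≤ cc (j+1) := by have := cc_ge (j+1); omega
      nlinarith

lemma exists_cc_eq {m : ℕ} (hm : 1 ≤ m) (hnp : ∀ j, 0 < j → cc j * cc (j+1) ≠ m) :
    ∃ k, cc k = m := by
  classical
  rcases eq_or_lt_of_le hm with h | h
  · exact ⟨0, by rw [cc_zero, ← h]⟩
  · have hex : ∃ i, m ≤ cc i := ⟨m, by have := cc_ge m; omega⟩
    have hk : m ≤ cc (Nat.find hex) := Nat.find_spec hex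
    have hk0 : Nat.find hex ≠ 0 := by
      intro h0; rw [h0, cc_zero] at hk; omega
    obtain ⟨k', hkk⟩ : ∃ k', Nat.find hex = k' + 1 := ⟨Nat.find hex - 1, by omega⟩
    have hlt : cc k' < m := by
      have := Nat.find_min hex (m := k') (by omega)
      omega
    have hmem : m ∈ S k' := ⟨hlt, fun j hj hjk => hnp j hj⟩
    have h2 := cc_le_of_mem hmem
    rw [hkk] at hk
    exact ⟨k'+1, by omega⟩

lemma cc_card_bound (k : ℕ) :
    cc k ≤ (k + 1) + Nat.sqrt (cc k) := by
  have hsub : Finset.Icc 1 (cc k) ⊆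
      ((Finset.range (k+1)).image cc) ∪
      ((Finset.Icc 1 (Nat.sqrt (cc k))).image (fun j => cc j * cc (j+1))) := by
    intro m hm
    rw [Finset.mem_Icc] at hm
    by_cases h : ∃ j, 0 < j ∧ cc j * cc (j+1) = m
    · obtain ⟨j, hj, hjm⟩ := h
      refine Finset.mem_union_right _ (Finset.mem_image.mpr ⟨j, ?_, hjm⟩)
      rw [Finset.mem_Icc]
      constructor
      · omega
      · rw [Nat.le_sqrt]
        have h1 := cc_ge j
        have h2 := cc_ge (j+1)
        nlinarith [hm.2]
    · push_neg at h
      obtain ⟨i, hi⟩ := exists_cc_eq hm.1 (fun j hj => h j hj)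
      refine Finset.mem_union_left _ (Finset.mem_image.mpr ⟨i, ?_, hi⟩)
      rw [Finset.mem_range]
      by_contra hik
      have : cc k < cc i := cc_mono (by omega)
      omega
  have hcard := Finset.card_le_card hsub
  calc cc k = (Finset.Icc 1 (cc k)).card := by rw [Nat.card_Icc]; omega
    _ ≤ _ := hcard
    _ ≤ ((Finset.range (k+1)).image cc).card +
        ((Finset.Icc 1 (Nat.sqrt (cc k))).image (fun j => cc j * cc (j+1))).card :=
      Finset.card_union_le _ _
    _ ≤ (k+1) + Nat.sqrt (cc k) := by
      gcongr
      · exact le_trans (Finset.card_image_le) (by simp)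
      · exact le_trans (Finset.card_image_le) (by rw [Nat.card_Icc]; omega)

lemma cc_le_linear (k : ℕ) : cc k ≤ 2 * k + 2 := by
  have h1 := cc_card_bound k
  by_cases h : cc k < 4
  · match k with
    | 0 => rw [cc_zero]; omega
    | (k'+1) => omega
  · have h2 : 2 ≤ Nat.sqrt (cc k) := by rw [Nat.le_sqrt]; omega
    have h3 := Nat.sqrt_le' (cc k)
    nlinarith [h1, h2, h3]

lemma cc_upper (k : ℕ) : cc k ≤ k + 1 + Nat.sqrt (2 * k + 2) := by
  have := cc_card_bound k
  have h2 : Nat.sqrt (cc k) ≤ Nat.sqrt (2 * k + 2) := Nat.sqrt_le_sqrt (cc_le_linear k)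
  omega

noncomputable def g (n : ℕ) : ℕ :=
  if n = 0 then 1 else if n % 2 = 1 then cc ((n+1)/2) else cc (n/2) * cc (n/2 + 1)

lemma g_odd (k : ℕ) : g (2*k+1) = cc (k+1) := by
  unfold g
  have h1 : (2*k+1) % 2 = 1 := by omega
  have h2 : (2*k+1+1)/2 = k+1 := by omega
  simp [h1, h2]

lemma g_even (k : ℕ) : g (2*k+2) = cc (k+1) * cc (k+2) := by
  unfold g
  have h1 : (2*k+2) % 2 = 0 := by omega
  have h2 : (2*k+2)/2 = k+1 := by omega
  simp [h1, h2]


lemma g_zero : g 0 = 1 := by unfold g; simp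

lemma g_pos (n : ℕ) : 0 < g n := by
  unfold g
  split_ifs
  · omega
  · have := cc_ge ((n+1)/2); omega
  · have h1 := cc_ge (n/2); have h2 := cc_ge (n/2+1); exact Nat.mul_pos (by omega) (by omega)

lemma g_inj : Function.Injective g := by
  have key : ∀ n, n = 0 ∨ (∃ k, n = 2*k+1) ∨ (∃ k, n = 2*k+2) := by
    intro n
    rcases n with _ | n
    · left; rfl
    · rcases Nat.even_or_odd n with ⟨k, hk⟩ | ⟨k, hk⟩
      · right; left; exact ⟨k, by omega⟩
      · right; right; exact ⟨k, by omega⟩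
  intro a b hab
  rcases key a with rfl | ⟨k, rfl⟩ | ⟨k, rfl⟩ <;> rcases key b with rfl | ⟨l, rfl⟩ | ⟨l, rfl⟩
  · rfl
  · rw [g_zero, g_odd] at hab
    have := cc_ge (l+1); omega
  · rw [g_zero, g_even] at hab
    have := cc_ge (l+1); have := cc_ge (l+2); nlinarith
  · rw [g_odd, g_zero] at hab; have := cc_ge (k+1); omega
  · rw [g_odd, g_odd] at hab
    have := cc_mono.injective hab; omega
  · rw [g_odd, g_even] at hab
    exact absurd hab.symm (cc_not_prod (k+1) (l+1) (by omega))
  · rw [g_even, g_zero] at hab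
    have := cc_ge (k+1); have := cc_ge (k+2); nlinarith
  · rw [g_even, g_odd] at hab
    exact absurd hab (cc_not_prod (l+1) (k+1) (by omega))
  · rw [g_even, g_even] at hab
    rcases lt_trichotomy k l with h | h | h
    · exfalso
      have h1 : cc (k+1) < cc (l+1) := cc_mono (by omega)
      have h2 : cc (k+2) < cc (l+2) := cc_mono (by omega)
      have p1 := cc_ge (k+1); have p2 := cc_ge (k+2)
      nlinarith
    · omega
    · exfalso
      have h1 : cc (l+1) < cc (k+1) := cc_mono (by omega)
      have h2 : cc (l+2) < cc (k+2) := cc_mono (by omega)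
      have p1 := cc_ge (l+1); have p2 := cc_ge (l+2)
      nlinarith

lemma g_surj {m : ℕ} (hm : 1 ≤ m) : ∃ n, g n = m := by
  by_cases h : ∃ j, 0 < j ∧ cc j * cc (j+1) = m
  · obtain ⟨j, hj, hjm⟩ := h
    obtain ⟨k, rfl⟩ : ∃ k, j = k + 1 := ⟨j-1, by omega⟩
    exact ⟨2*k+2, by rw [g_even]; exact hjm⟩
  · push_neg at h
    obtain ⟨i, hi⟩ := exists_cc_eq hm (fun j hj => h j hj)
    match i with
    | 0 => exact ⟨0, by rw [g_zero, ← hi, cc_zero]⟩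
    | (k+1) => exact ⟨2*k+1, by rw [g_odd]; exact hi⟩

lemma g_chain (n : ℕ) : g n ∣ g (n+1) ∨ g (n+1) ∣ g n := by
  have key : n = 0 ∨ (∃ k, n = 2*k+1) ∨ (∃ k, n = 2*k+2) := by
    rcases n with _ | n'
    · left; rfl
    · rcases Nat.even_or_odd n' with ⟨k, hk⟩ | ⟨k, hk⟩
      · right; left; exact ⟨k, by omega⟩
      · right; right; exact ⟨k, by omega⟩
  rcases key with rfl | ⟨k, rfl⟩ | ⟨k, rfl⟩
  · left; rw [g_zero]; exact one_dvd _
  · left; rw [g_odd]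
    have : (2*k+1)+1 = 2*k+2 := by ring
    rw [this, g_even]
    exact dvd_mul_right _ _
  · right
    have : (2*k+2)+1 = 2*(k+1)+1 := by ring
    rw [this, g_odd, g_even]
    exact dvd_mul_left _ _

open Filter Real Topology

lemma cc_real_lower (k : ℕ) : ((k:ℝ) + 1) ≤ (cc k : ℝ) := by
  have := cc_ge k; exact_mod_cast this

lemma cc_real_upper (k : ℕ) : (cc k : ℝ) ≤ (k:ℝ) + 1 + Real.sqrt (2*(k:ℝ)+2) := by
  have h1 := cc_upper k
  have h2 : ((Nat.sqrt (2*k+2) : ℕ) : ℝ) ≤ Real.sqrt ((2*k+2 : ℕ) : ℝ) :=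
    Real.nat_sqrt_le_real_sqrt
  have h3 : (cc k : ℝ) ≤ (k:ℝ) + 1 + ((Nat.sqrt (2*k+2) : ℕ):ℝ) := by exact_mod_cast h1
  have h4 : ((2*k+2 : ℕ) : ℝ) = 2*(k:ℝ)+2 := by push_cast; ring
  rw [h4] at h2
  linarith

lemma tendsto_sqrt_term : Tendsto (fun k : ℕ => Real.sqrt (2*(k:ℝ)+2) / ((k:ℝ)+1)) atTop (𝓝 0) := by
  have h0 : Tendsto (fun k : ℕ => 2 / ((k:ℝ)+1)) atTop (𝓝 0) := by
    have := (tendsto_one_div_atTop_nhds_zero_nat (𝕜 := ℝ)).comp (tendsto_add_atTop_nat 1)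
    have h2 := this.const_mul (2:ℝ)
    rw [mul_zero] at h2
    apply h2.congr
    intro k
    simp only [Function.comp]
    push_cast
    ring
  have hs := h0.sqrt
  rw [Real.sqrt_zero] at hs
  apply hs.congr
  intro k
  have hk1 : (0:ℝ) < (k:ℝ) + 1 := by positivity
  rw [show 2*(k:ℝ)+2 = (2/((k:ℝ)+1)) * ((k:ℝ)+1)^2 by field_simp]
  rw [Real.sqrt_mul (by positivity), Real.sqrt_sq (by positivity)]
  field_simp

lemma tendsto_cc_ratio : Tendsto (fun k : ℕ => (cc k : ℝ) / ((k:ℝ)+1)) atTop (𝓝 1) := by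
  apply tendsto_of_tendsto_of_tendsto_of_le_of_le (g := fun _ : ℕ => (1:ℝ))
    (h := fun k : ℕ => 1 + Real.sqrt (2*(k:ℝ)+2) / ((k:ℝ)+1))
  · exact tendsto_const_nhds
  · have := tendsto_sqrt_term.const_add (1:ℝ)
    simpa using this
  · intro k
    have hk1 : (0:ℝ) < (k:ℝ) + 1 := by positivity
    rw [le_div_iff₀ hk1]
    simpa using cc_real_lower k
  · intro k
    have hk1 : (0:ℝ) < (k:ℝ) + 1 := by positivity
    rw [div_le_iff₀ hk1]
    have := cc_real_upper k
    have hs : 0 ≤ Real.sqrt (2*(k:ℝ)+2) := Real.sqrt_nonneg _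
    calc (cc k : ℝ) ≤ (k:ℝ) + 1 + Real.sqrt (2*(k:ℝ)+2) := this
      _ ≤ (1 + Real.sqrt (2*(k:ℝ)+2)/((k:ℝ)+1)) * ((k:ℝ)+1) := by
          rw [add_mul, one_mul, div_mul_cancel₀ _ (ne_of_gt hk1)]

noncomputable def rr (k : ℕ) : ℝ := ((cc (k+1) : ℝ) * (cc (k+2) : ℝ)) / (2*(k:ℝ)+3)^2

lemma tendsto_poly : Tendsto (fun k : ℕ => (((k:ℝ)+2) * ((k:ℝ)+3)) / (2*(k:ℝ)+3)^2) atTop (𝓝 (1/4)) := by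
  have ht : Tendsto (fun k : ℕ => 1/(k:ℝ)) atTop (𝓝 0) := tendsto_one_div_atTop_nhds_zero_nat
  have hnum : Tendsto (fun k : ℕ => (1 + 2*(1/(k:ℝ))) * (1 + 3*(1/(k:ℝ)))) atTop (𝓝 1) := by
    have h1 := ((ht.const_mul (2:ℝ)).const_add 1).mul ((ht.const_mul (3:ℝ)).const_add 1)
    simpa using h1
  have hden : Tendsto (fun k : ℕ => (2 + 3*(1/(k:ℝ)))^2) atTop (𝓝 4) := by
    have h1 := ((ht.const_mul (3:ℝ)).const_add 2).pow 2
    norm_num at h1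
    simpa [one_div] using h1
  have hdiv := hnum.div hden (by norm_num)
  norm_num at hdiv
  apply hdiv.congr'
  filter_upwards [eventually_ge_atTop 1] with k hk
  have hk0 : ((k:ℝ)) ≠ 0 := by
    have : (1:ℝ) ≤ (k:ℝ) := by exact_mod_cast hk
    linarith
  have hd : (2*(k:ℝ)+3) ≠ 0 := by positivity
  simp only [Pi.div_apply]
  field_simp


lemma tendsto_rr : Tendsto rr atTop (𝓝 (1/4)) := by
  have hA : Tendsto (fun k : ℕ => (cc (k+1) : ℝ) / ((k:ℝ)+2)) atTop (𝓝 1) := by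
    have := tendsto_cc_ratio.comp (tendsto_add_atTop_nat 1)
    apply this.congr
    intro k
    simp only [Function.comp]
    push_cast
    ring_nf
  have hB : Tendsto (fun k : ℕ => (cc (k+2) : ℝ) / ((k:ℝ)+3)) atTop (𝓝 1) := by
    have := tendsto_cc_ratio.comp (tendsto_add_atTop_nat 2)
    apply this.congr
    intro k
    simp only [Function.comp]
    push_cast
    ring_nf
  have h := (hA.mul hB).mul tendsto_poly
  norm_num at h
  apply h.congr
  intro k
  unfold rr
  have h2 : ((k:ℝ)+2) ≠ 0 := by positivity
  have h3 : ((k:ℝ)+3) ≠ 0 := by positivity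
  have hd : (2*(k:ℝ)+3) ≠ 0 := by positivity
  field_simp

noncomputable def ff : ℕ+ → ℕ+ := fun n => ⟨g ((n:ℕ)-1), g_pos _⟩

lemma ff_coe (n : ℕ+) : ((ff n : ℕ+) : ℕ) = g ((n:ℕ)-1) := rfl

lemma ff_bij : Function.Bijective ff := by
  constructor
  · intro a b hab
    have h1 : g ((a:ℕ)-1) = g ((b:ℕ)-1) := congrArg PNat.val hab
    have h2 := g_inj h1
    have h5 : ((a:ℕ) - 1) + 1 = ((b:ℕ) - 1) + 1 := by rw [h2]
    rw [Nat.sub_add_cancel (show 1 ≤ (a:ℕ) from a.2),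
      Nat.sub_add_cancel (show 1 ≤ (b:ℕ) from b.2)] at h5
    exact PNat.coe_injective h5
  · intro m
    obtain ⟨n, hn⟩ := g_surj m.2
    refine ⟨⟨n+1, by omega⟩, ?_⟩
    apply PNat.coe_injective
    change g ((n+1:ℕ)-1) = ((m:ℕ+):ℕ)
    exact hn

lemma ff_chain (n : ℕ+) : ff n ∣ ff (n + 1) ∨ ff (n + 1) ∣ ff n := by
  have h1 : ((n + 1 : ℕ+) : ℕ) - 1 = (n : ℕ) := by
    rw [PNat.add_coe, PNat.one_coe]; simp
  have h2 : (n : ℕ) - 1 + 1 = (n : ℕ) := Nat.sub_add_cancel n.2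
  have := g_chain ((n:ℕ)-1)
  rw [h2] at this
  rcases this with h | h
  · left
    rw [PNat.dvd_iff, ff_coe, ff_coe, h1]
    exact h
  · right
    rw [PNat.dvd_iff, ff_coe, ff_coe, h1]
    exact h

-- value at odd coordinates (products)
lemma u_prod (k : ℕ) (h : 0 < 2*k+3) :
    ((ff ⟨2*k+3, h⟩ : ℕ+) : ℕ) = cc (k+1) * cc (k+2) := by
  change g (2*k+3-1) = _
  have h3 : 2*k+3-1 = 2*k+2 := by omega
  rw [h3, g_even]

lemma g_le_bound (m : ℕ) : g m ≤ 9 * (m+1)^2 := by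
  have key : m = 0 ∨ (∃ k, m = 2*k+1) ∨ (∃ k, m = 2*k+2) := by
    rcases m with _ | m'
    · left; rfl
    · rcases Nat.even_or_odd m' with ⟨k, hk⟩ | ⟨k, hk⟩
      · right; left; exact ⟨k, by omega⟩
      · right; right; exact ⟨k, by omega⟩
  rcases key with rfl | ⟨k, rfl⟩ | ⟨k, rfl⟩
  · rw [g_zero]; norm_num
  · rw [g_odd]
    have := cc_le_linear (k+1)
    nlinarith
  · rw [g_even]
    have h1 := cc_le_linear (k+1)
    have h2 := cc_le_linear (k+2)
    nlinarith

lemma u_bound (n : ℕ+) : ((ff n : ℕ+) : ℕ) ≤ 9 * ((n:ℕ))^2 := by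
  have hn : 1 ≤ (n:ℕ) := n.2
  have h1 := g_le_bound ((n:ℕ)-1)
  have h2 : (n:ℕ)-1+1 = (n:ℕ) := by omega
  rw [h2] at h1
  rw [ff_coe]
  exact h1

lemma npos_real (n : ℕ+) : (0:ℝ) < ((n:ℕ):ℝ) := by
  have : (0:ℕ) < (n:ℕ) := n.2
  exact_mod_cast this

lemma u_bound_real (n : ℕ+) : (((ff n : ℕ+) : ℕ):ℝ) / (((n:ℕ)):ℝ)^2 ≤ 9 := by
  have h0 := npos_real n
  rw [div_le_iff₀ (by positivity)]
  have := u_bound n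
  calc (((ff n : ℕ+) : ℕ):ℝ) ≤ ((9 * ((n:ℕ))^2 : ℕ) : ℝ) := by exact_mod_cast this
    _ = 9 * (((n:ℕ)):ℝ)^2 := by push_cast; ring

lemma ev_upper {ε : ℝ} (hε : 0 < ε) :
    ∀ᶠ n : ℕ+ in atTop, (((ff n : ℕ+) : ℕ):ℝ)/(((n:ℕ)):ℝ)^2 ≤ 1/4 + ε := by
  have h1 : ∀ᶠ k in atTop, rr k < 1/4 + ε := tendsto_rr.eventually_lt_const (by linarith)
  obtain ⟨K, hK⟩ := eventually_atTop.mp h1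
  rw [eventually_atTop]
  refine ⟨⟨2*K+6, by omega⟩, ?_⟩
  intro n hn
  have hn' : 2*K+6 ≤ (n:ℕ) := by
    have := (PNat.coe_le_coe _ _).mpr hn
    simpa using this
  have key : (∃ k, (n:ℕ) = 2*k+3 ∧ K ≤ k) ∨ (∃ k, (n:ℕ) = 2*k+2 ∧ 2 ≤ k) := by
    rcases Nat.even_or_odd ((n:ℕ)) with ⟨k, hk⟩ | ⟨k, hk⟩
    · right; exact ⟨k-1, by omega, by omega⟩
    · left; exact ⟨k-1, by omega, by omega⟩
  rcases key with ⟨k, hk, hkK⟩ | ⟨k, hk, hk2⟩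
  · have hval : ((ff n : ℕ+) : ℕ) = cc (k+1) * cc (k+2) := by
      rw [ff_coe, hk]
      have h3 : 2*k+3-1 = 2*k+2 := by omega
      rw [h3, g_even]
    have := le_of_lt (hK k hkK)
    unfold rr at this
    rw [hval, hk]
    push_cast
    convert this using 2
  · have hval : ((ff n : ℕ+) : ℕ) = cc (k+1) := by
      rw [ff_coe, hk]
      have h3 : 2*k+2-1 = 2*k+1 := by omega
      rw [h3, g_odd]
    rw [hval, hk]
    have hcc : (cc (k+1) : ℝ) ≤ 2*(k:ℝ)+4 := by
      have := cc_le_linear (k+1)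
      have : (cc (k+1) : ℝ) ≤ ((2*(k+1)+2 : ℕ):ℝ) := by exact_mod_cast this
      calc (cc (k+1):ℝ) ≤ ((2*(k+1)+2 : ℕ):ℝ) := this
        _ = 2*(k:ℝ)+4 := by push_cast; ring
    have hden : (0:ℝ) < (((2*k+2 : ℕ)):ℝ)^2 := by positivity
    rw [div_le_iff₀ hden]
    have hc : (((2*k+2:ℕ)):ℝ) = 2*(k:ℝ)+2 := by push_cast; ring
    rw [hc]
    have hk2' : (2:ℝ) ≤ (k:ℝ) := by exact_mod_cast hk2
    nlinarith

lemma freq_lower {ε : ℝ} (hε : 0 < ε) :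
    ∃ᶠ n : ℕ+ in atTop, 1/4 - ε ≤ (((ff n : ℕ+) : ℕ):ℝ)/(((n:ℕ)):ℝ)^2 := by
  have h1 : ∀ᶠ k in atTop, 1/4 - ε < rr k := tendsto_rr.eventually_const_lt (by linarith)
  obtain ⟨K, hK⟩ := eventually_atTop.mp h1
  rw [frequently_atTop]
  intro N
  refine ⟨⟨2*(max K (N:ℕ))+3, by omega⟩, ?_, ?_⟩
  · change (N : ℕ+) ≤ _
    change (N:ℕ) ≤ 2*(max K (N:ℕ))+3
    have h2 : (N:ℕ) ≤ 2*(max K (N:ℕ))+3 := by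
      have := le_max_right K (N:ℕ); omega
    simpa using h2
  · have hval := u_prod (max K (N:ℕ)) (by omega)
    rw [hval, PNat.mk_coe]
    have := le_of_lt (hK (max K (N:ℕ)) (le_max_left _ _))
    unfold rr at this
    push_cast
    convert this using 2
    · rfl
    · norm_cast

theorem chain_permutation_limsup_quarter :
    ∃ f : ℕ+ → ℕ+, Function.Bijective f ∧
      (∀ n : ℕ+, f n ∣ f (n + 1) ∨ f (n + 1) ∣ f n) ∧
      Filter.limsup (fun n : ℕ+ => ((f n : ℕ) : ℝ) / ((n : ℕ) : ℝ) ^ 2)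
        Filter.atTop = 1 / 4 := by
  refine ⟨ff, ff_bij, ff_chain, ?_⟩
  set u : ℕ+ → ℝ := fun n => (((ff n : ℕ+) : ℕ) : ℝ) / (((n:ℕ)):ℝ)^2 with hu
  have hbdd : IsBoundedUnder (· ≤ ·) atTop u := by
    refine ⟨9, ?_⟩
    rw [eventually_map]
    exact Eventually.of_forall u_bound_real
  have hcb : IsCoboundedUnder (· ≤ ·) atTop u := by
    apply Filter.IsCoboundedUnder.of_frequently_ge (a := 0)
    apply Frequently.of_forall
    intro n
    have := npos_real n
    positivity
  apply le_antisymm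
  · by_contra hcon
    push_neg at hcon
    set ε := (limsup u atTop - 1/4)/2 with hε
    have hεpos : 0 < ε := by rw [hε]; linarith
    have := limsup_le_of_le hcb (ev_upper hεpos)
    rw [hε] at this
    linarith
  · by_contra hcon
    push_neg at hcon
    set ε := (1/4 - limsup u atTop)/2 with hε
    have hεpos : 0 < ε := by rw [hε]; linarith
    have := le_limsup_of_frequently_le (freq_lower hεpos) hbdd
    rw [hε] at this
    linarith
end
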